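/- The two-color graph Ramsey number R(K_{2,5}, K_{3,5}) is at least 20; that is, there exists a simple graph G on 19 vertices such that the complement of G contains no copy of the complete bipartite graph K_{2,5} as a subgraph and G contains no copy of the complete bipartite graph K_{3,5} as a subgraph. -/

import Mathlib

open SimpleGraph

/-- `ContainsCopy G H` means the graph `H` contains a copy of `G` as a
(not necessarily induced) subgraph. -/
def ContainsCopy {α β : Type*} (G : SimpleGraph α) (H : SimpleGraph β) : Prop :=
  ∃ f : α → β, Function.Injective f ∧ ∀ ⦃u v : α⦄, G.Adj u v → H.Adj (f u) (f v)

/-- The join `G + H` of two graphs: take disjoint copies of `G` and `H` and add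
all edges between them. -/
def graphJoin {α β : Type*} (G : SimpleGraph α) (H : SimpleGraph β) :
    SimpleGraph (α ⊕ β) where
  Adj u v :=
    match u, v with
    | .inl a, .inl b => G.Adj a b
    | .inr a, .inr b => H.Adj a b
    | .inl _, .inr _ => True
    | .inr _, .inl _ => True
  symm := by
    constructor
    intro u v h
    cases u <;> cases v <;> simp_all <;> exact h.symm
  loopless := by
    constructor
    intro u
    cases u <;> simp

/-- The wheel `W n`: the join of a single vertex with a cycle on `n - 1` vertices. -/
def wheelGraph (n : ℕ) : SimpleGraph (Fin 1 ⊕ Fin (n - 1)) :=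
  graphJoin (⊥ : SimpleGraph (Fin 1)) (cycleGraph (n - 1))

/-- The book `B n`: the join of an edge `K₂` with an empty graph on `n` vertices. -/
def bookGraph (n : ℕ) : SimpleGraph (Fin 2 ⊕ Fin n) :=
  graphJoin (⊤ : SimpleGraph (Fin 2)) (⊥ : SimpleGraph (Fin n))

/-- The two-colour graph Ramsey number `R(G₁, G₂)`: the least `n` such that every
simple graph `G` on `n` vertices contains a copy of `G₁`, or its complement
contains a copy of `G₂`. -/
noncomputable def ramseyNumber {α β : Type*} (G₁ : SimpleGraph α) (G₂ : SimpleGraph β) : ℕ :=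
  sInf {n : ℕ | ∀ G : SimpleGraph (Fin n), ContainsCopy G₁ G ∨ ContainsCopy G₂ Gᶜ}

/-! ### The counterexample graph on 19 vertices -/

def connSet : Finset (Fin 19) := {1,2,3,5,9,10,14,16,17,18}

def G19 : SimpleGraph (Fin 19) where
  Adj u v := u ≠ v ∧ ((u - v) ∈ connSet ∨ (v - u) ∈ connSet)
  symm := by constructor; intro u v h; exact ⟨h.1.symm, h.2.symm⟩
  loopless := ⟨fun u h => h.1 rfl⟩

instance : DecidableRel G19.Adj := fun u v =>
  inferInstanceAs (Decidable (u ≠ v ∧ ((u - v) ∈ connSet ∨ (v - u) ∈ connSet)))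

/-- No `K_{2,5}` in a graph where every pair of vertices has at most 4 common
neighbours. -/
lemma not_contains_K25 (H : SimpleGraph (Fin 19)) [DecidableRel H.Adj]
    (h : ∀ u v : Fin 19,
      (Finset.univ.filter (fun w => H.Adj u w ∧ H.Adj v w)).card ≤ 4 ∨ u = v) :
    ¬ ContainsCopy (completeBipartiteGraph (Fin 2) (Fin 5)) H := by
  rintro ⟨f, finj, hf⟩
  set u := f (Sum.inl 0) with hu
  set v := f (Sum.inl 1) with hv
  have huv : u ≠ v := fun e =>
    absurd (finj e) (by decide)
  have ginj : Function.Injective (fun j : Fin 5 => f (Sum.inr j)) := by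
    intro a b hab
    have := finj hab
    simpa using this
  have hsub : Finset.univ.image (fun j : Fin 5 => f (Sum.inr j)) ⊆
      Finset.univ.filter (fun w => H.Adj u w ∧ H.Adj v w) := by
    intro w hw
    simp only [Finset.mem_image, Finset.mem_univ, true_and] at hw
    obtain ⟨j, rfl⟩ := hw
    simp only [Finset.mem_filter, Finset.mem_univ, true_and]
    exact ⟨hf (by simp), hf (by simp)⟩
  have hcard : (Finset.univ.image (fun j : Fin 5 => f (Sum.inr j))).card = 5 := by
    rw [Finset.card_image_of_injective _ ginj]; simp
  rcases h u v with h4 | he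
  · have := Finset.card_le_card hsub
    omega
  · exact huv he

/-- No `K_{3,5}` in a graph where every triple of vertices has at most 4 common
neighbours. -/
lemma not_contains_K35 (H : SimpleGraph (Fin 19)) [DecidableRel H.Adj]
    (h : ∀ u v x : Fin 19,
      (Finset.univ.filter (fun w => H.Adj u w ∧ H.Adj v w ∧ H.Adj x w)).card ≤ 4 ∨
        ¬(u ≠ v ∧ u ≠ x ∧ v ≠ x)) :
    ¬ ContainsCopy (completeBipartiteGraph (Fin 3) (Fin 5)) H := by
  rintro ⟨f, finj, hf⟩
  set u := f (Sum.inl 0) with hu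
  set v := f (Sum.inl 1) with hv
  set x := f (Sum.inl 2) with hx
  have hne : u ≠ v ∧ u ≠ x ∧ v ≠ x :=
    ⟨fun e => absurd (finj e) (by decide), fun e => absurd (finj e) (by decide),
      fun e => absurd (finj e) (by decide)⟩
  have ginj : Function.Injective (fun j : Fin 5 => f (Sum.inr j)) := by
    intro a b hab
    have := finj hab
    simpa using this
  have hsub : Finset.univ.image (fun j : Fin 5 => f (Sum.inr j)) ⊆
      Finset.univ.filter (fun w => H.Adj u w ∧ H.Adj v w ∧ H.Adj x w) := by
    intro w hw
    simp only [Finset.mem_image, Finset.mem_univ, true_and] at hw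
    obtain ⟨j, rfl⟩ := hw
    simp only [Finset.mem_filter, Finset.mem_univ, true_and]
    exact ⟨hf (by simp), hf (by simp), hf (by simp)⟩
  have hcard : (Finset.univ.image (fun j : Fin 5 => f (Sum.inr j))).card = 5 := by
    rw [Finset.card_image_of_injective _ ginj]; simp
  rcases h u v x with h4 | he
  · have := Finset.card_le_card hsub
    omega
  · exact he hne

set_option maxHeartbeats 2000000 in
lemma G19_pairs : ∀ u v : Fin 19,
    (Finset.univ.filter (fun w => G19ᶜ.Adj u w ∧ G19ᶜ.Adj v w)).card ≤ 4 ∨ u = v := by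
  decide

set_option maxHeartbeats 8000000 in
lemma G19_triples : ∀ u v x : Fin 19,
    (Finset.univ.filter (fun w => G19.Adj u w ∧ G19.Adj v w ∧ G19.Adj x w)).card ≤ 4 ∨
      ¬(u ≠ v ∧ u ≠ x ∧ v ≠ x) := by
  decide

lemma G19_no_K25 : ¬ ContainsCopy (completeBipartiteGraph (Fin 2) (Fin 5)) G19ᶜ :=
  not_contains_K25 G19ᶜ G19_pairs

lemma G19_no_K35 : ¬ ContainsCopy (completeBipartiteGraph (Fin 3) (Fin 5)) G19 :=
  not_contains_K35 G19 G19_triples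

/-! ### A crude Ramsey theorem, to show the defining set is nonempty -/

lemma ramsey_clique {V : Type*} [DecidableEq V] (G : SimpleGraph V) [DecidableRel G.Adj] :
    ∀ n a b : ℕ, a + b ≤ n → ∀ A : Finset V, (a + b).choose a ≤ A.card →
      (∃ S : Finset V, S ⊆ A ∧ S.card = a ∧ G.IsClique ↑S) ∨
      (∃ S : Finset V, S ⊆ A ∧ S.card = b ∧ Gᶜ.IsClique ↑S) := by
  intro n
  induction n with
  | zero =>
    intro a b hab A _
    have ha : a = 0 := by omega
    subst ha
    exact Or.inl ⟨∅, Finset.empty_subset _, Finset.card_empty, by simp⟩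
  | succ n ih =>
    intro a b hab A hA
    match a, b with
    | 0, b => exact Or.inl ⟨∅, Finset.empty_subset _, Finset.card_empty, by simp⟩
    | a + 1, 0 => exact Or.inr ⟨∅, Finset.empty_subset _, Finset.card_empty, by simp⟩
    | a + 1, b + 1 =>
      have hchoose : (a + 1 + (b + 1)).choose (a + 1) =
          (a + (b + 1)).choose a + (a + 1 + b).choose (a + 1) := by
        have := Nat.choose_succ_succ (a + b + 1) a
        have e1 : a + 1 + (b + 1) = a + b + 1 + 1 := by omega
        have e2 : a + (b + 1) = a + b + 1 := by omega
        have e3 : a + 1 + b = a + b + 1 := by omega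
        rw [e1, e2, e3, this]
      have hApos : 0 < A.card := by
        have h1 : 0 < (a + 1 + (b + 1)).choose (a + 1) :=
          Nat.choose_pos (by omega)
        omega
      obtain ⟨v, hv⟩ := Finset.card_pos.mp hApos
      set B := (A.erase v).filter (fun w => G.Adj v w) with hB
      set C := (A.erase v).filter (fun w => ¬G.Adj v w) with hC
      have hBC : B.card + C.card = A.card - 1 := by
        rw [hB, hC, Finset.card_filter_add_card_filter_not,
          Finset.card_erase_of_mem hv]
      have hcase : (a + (b + 1)).choose a ≤ B.card ∨ (a + 1 + b).choose (a + 1) ≤ C.card := by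
        by_contra hcon
        push_neg at hcon
        omega
      rcases hcase with hBcard | hCcard
      · rcases ih a (b + 1) (by omega) B hBcard with ⟨S, hSB, hScard, hSclq⟩ | ⟨S, hSB, hScard, hSclq⟩
        · -- extend with v
          have hvS : v ∉ S := fun hmem => by
            have := Finset.mem_erase.mp (Finset.mem_of_mem_filter _ (hSB hmem))
            exact this.1 rfl
          refine Or.inl ⟨insert v S, ?_, ?_, ?_⟩
          · refine Finset.insert_subset hv (hSB.trans ?_)
            exact (Finset.filter_subset _ _).trans (Finset.erase_subset _ _)
          · rw [Finset.card_insert_of_notMem hvS, hScard]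
          · rw [Finset.coe_insert]
            refine hSclq.insert fun w hw _ => ?_
            exact (Finset.mem_filter.mp (hSB hw)).2
        · exact Or.inr ⟨S, hSB.trans ((Finset.filter_subset _ _).trans (Finset.erase_subset _ _)),
            hScard, hSclq⟩
      · rcases ih (a + 1) b (by omega) C hCcard with ⟨S, hSC, hScard, hSclq⟩ | ⟨S, hSC, hScard, hSclq⟩
        · exact Or.inl ⟨S, hSC.trans ((Finset.filter_subset _ _).trans (Finset.erase_subset _ _)),
            hScard, hSclq⟩
        · have hvS : v ∉ S := fun hmem => by
            have := Finset.mem_erase.mp (Finset.mem_of_mem_filter _ (hSC hmem))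
            exact this.1 rfl
          refine Or.inr ⟨insert v S, ?_, ?_, ?_⟩
          · refine Finset.insert_subset hv (hSC.trans ?_)
            exact (Finset.filter_subset _ _).trans (Finset.erase_subset _ _)
          · rw [Finset.card_insert_of_notMem hvS, hScard]
          · rw [Finset.coe_insert]
            refine hSclq.insert fun w hw hne => ?_
            have hmem := Finset.mem_filter.mp (hSC hw)
            exact (SimpleGraph.compl_adj _ _ _).mpr ⟨hne, hmem.2⟩

/-- A clique of size `m + n` contains a copy of `K_{m,n}`. -/
lemma clique_copy {N m n : ℕ} (H : SimpleGraph (Fin N)) (S : Finset (Fin N))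
    (hc : S.card = m + n) (hS : H.IsClique ↑S) :
    ContainsCopy (completeBipartiteGraph (Fin m) (Fin n)) H := by
  refine ⟨fun x => ↑(S.orderIsoOfFin hc (finSumFinEquiv x)), ?_, ?_⟩
  · intro a b hab
    exact finSumFinEquiv.injective
      ((S.orderIsoOfFin hc).injective (Subtype.ext hab))
  · intro u v huv
    have hne : u ≠ v := (completeBipartiteGraph (Fin m) (Fin n)).ne_of_adj huv
    refine hS ?_ ?_ ?_
    · exact (S.orderIsoOfFin hc (finSumFinEquiv u)).2
    · exact (S.orderIsoOfFin hc (finSumFinEquiv v)).2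
    · intro h
      exact hne (finSumFinEquiv.injective ((S.orderIsoOfFin hc).injective (Subtype.ext h)))

lemma mem_ramsey_set : 6435 ∈ {n : ℕ | ∀ G : SimpleGraph (Fin n),
    ContainsCopy (completeBipartiteGraph (Fin 2) (Fin 5)) G ∨
    ContainsCopy (completeBipartiteGraph (Fin 3) (Fin 5)) Gᶜ} := by
  intro G
  letI : DecidableRel G.Adj := fun a b => Classical.dec _
  have hcard : (15).choose 7 ≤ (Finset.univ : Finset (Fin 6435)).card := by
    rw [Finset.card_univ, Fintype.card_fin]
    decide
  rcases ramsey_clique G 15 7 8 (le_refl 15) Finset.univ hcard with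
    ⟨S, _, hScard, hSclq⟩ | ⟨S, _, hScard, hSclq⟩
  · exact Or.inl (clique_copy G S hScard hSclq)
  · exact Or.inr (clique_copy Gᶜ S hScard hSclq)

/-- **R(K₂,₅, K₃,₅) ≥ 20**: the two-colour Ramsey number of `K_{2,5}` and `K_{3,5}`
is at least 20; that is, there is a graph `G` on 19 vertices whose complement
contains no copy of `K_{2,5}` and which contains no copy of `K_{3,5}`. -/
theorem ramsey_K25_K35_ge_20 :
    20 ≤ ramseyNumber (completeBipartiteGraph (Fin 2) (Fin 5))
          (completeBipartiteGraph (Fin 3) (Fin 5)) ∧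
    ∃ G : SimpleGraph (Fin 19),
      ¬ ContainsCopy (completeBipartiteGraph (Fin 2) (Fin 5)) Gᶜ ∧
      ¬ ContainsCopy (completeBipartiteGraph (Fin 3) (Fin 5)) G := by
  constructor
  · apply le_csInf ⟨6435, mem_ramsey_set⟩
    intro n hn
    by_contra hlt
    push_neg at hlt
    have hle : n ≤ 19 := by omega
    set f : Fin n → Fin 19 := Fin.castLE hle with hf
    have finj : Function.Injective f := Fin.castLE_injective hle
    rcases hn ((G19ᶜ).comap f) with h1 | h2
    · refine G19_no_K25 ?_
      obtain ⟨g, ginj, hg⟩ := h1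
      exact ⟨f ∘ g, finj.comp ginj, fun u v h => hg h⟩
    · refine G19_no_K35 ?_
      obtain ⟨g, ginj, hg⟩ := h2
      refine ⟨f ∘ g, finj.comp ginj, fun u v h => ?_⟩
      have h' := hg h
      rw [SimpleGraph.compl_adj] at h'
      by_contra hadj
      exact h'.2 ((SimpleGraph.compl_adj _ _ _).mpr ⟨finj.ne h'.1, hadj⟩)
  · exact ⟨G19, G19_no_K25, G19_no_K35⟩
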